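/- On the split octonions, every Lie algebra element X = Σ_{i<j} w̃_{ij} Ẽ^i Ẽ^j (with Ẽ^i = L_{ẽ^i}) satisfies X^T τ + τ X = 0, where τ = diag(-1,1,1,1,1,-1,-1,-1); hence the split-signature quadratic form |y|² = -y^T τ y on 𝕆̃ ≅ ℝ⁸ is infinitesimally preserved. -/

import Mathlib

open Matrix BigOperators

noncomputable section

def sIdx : Fin 8 → Fin 8 → Fin 8 :=
  ![![0, 1, 2, 3, 4, 5, 6, 7],
    ![1, 0, 7, 6, 5, 4, 3, 2],
    ![2, 7, 0, 5, 6, 3, 4, 1],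
    ![3, 6, 5, 0, 7, 2, 1, 4],
    ![4, 5, 6, 7, 0, 1, 2, 3],
    ![5, 4, 3, 2, 1, 0, 7, 6],
    ![6, 3, 4, 1, 2, 7, 0, 5],
    ![7, 2, 1, 4, 3, 6, 5, 0]]

def sSgn : Fin 8 → Fin 8 → ℝ :=
  ![![1, 1, 1, 1, 1, 1, 1, 1],
    ![1, 1, 1, -1, 1, 1, -1, 1],
    ![1, -1, 1, 1, 1, 1, 1, -1],
    ![1, 1, -1, 1, 1, -1, 1, 1],
    ![1, -1, -1, -1, 1, -1, -1, -1],
    ![1, -1, -1, 1, 1, -1, 1, -1],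
    ![1, 1, -1, -1, 1, -1, -1, 1],
    ![1, -1, 1, -1, 1, 1, -1, -1]]

/-- Left multiplication by the split octonion `y` as an 8×8 real matrix. -/
def Lt (y : Fin 8 → ℝ) : Matrix (Fin 8) (Fin 8) ℝ :=
  Matrix.of fun r c => ∑ i, if r = sIdx i c then sSgn i c * y i else 0

/-- The imaginary split octonion unit `ẽ^(i+1)` as a vector. -/
def et (i : Fin 7) : Fin 8 → ℝ := Pi.single i.succ 1

/-- The Clifford generator `Ẽ^(i+1) = L_{ẽ^(i+1)}`. -/
def Et (i : Fin 7) : Matrix (Fin 8) (Fin 8) ℝ := Lt (et i)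

/-- The general element `X = Σ_{i<j} w̃_{ij} Ẽ^i Ẽ^j` of the Lie algebra so(4,3) acting on 𝕆̃. -/
def Xtw (w : Fin 7 → Fin 7 → ℝ) : Matrix (Fin 8) (Fin 8) ℝ :=
  ∑ i, ∑ j, if i < j then w i j • (Et i * Et j) else 0

/-- The matrix τ = diag(-1,1,1,1,1,-1,-1,-1) of the split quadratic form. -/
def tauD : Matrix (Fin 8) (Fin 8) ℝ := Matrix.diagonal ![(-1 : ℝ), 1, 1, 1, 1, -1, -1, -1]

/-!
Each generator `Ẽⁱ` is τ-skew (`(Ẽⁱ)ᵀ τ = -τ Ẽⁱ`: left multiplication by an imaginary unit is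
skew for the multiplicative split norm), and distinct generators anticommute (alternativity).
For τ-skew `A`, `B` with `AB = -BA` one gets `(AB)ᵀ τ = Bᵀ Aᵀ τ = τ B A = -τ A B`, so every
product `Ẽⁱ Ẽʲ`, and hence `X`, lies in the Lie algebra of τ-skew matrices. The two facts
about the generators are finite checks, carried out by `decide` on an integer copy of the
multiplication table.
-/
section SkewAdjoint

variable {R n : Type*} [CommRing R] [Fintype n] [DecidableEq n] {J : Matrix n n R}

theorem mem_skewAdjointMatricesSubmodule_iff_transpose_mul_add_mul_eq_zero {A : Matrix n n R} :
    A ∈ skewAdjointMatricesSubmodule J ↔ Aᵀ * J + J * A = 0 := by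
  rw [mem_skewAdjointMatricesSubmodule, Matrix.IsSkewAdjoint, Matrix.IsAdjointPair, mul_neg,
    eq_neg_iff_add_eq_zero]

theorem mul_mem_skewAdjointMatricesSubmodule_of_anticomm {A B : Matrix n n R}
    (hA : A ∈ skewAdjointMatricesSubmodule J) (hB : B ∈ skewAdjointMatricesSubmodule J)
    (hAB : A * B = -(B * A)) : A * B ∈ skewAdjointMatricesSubmodule J := by
  rw [mem_skewAdjointMatricesSubmodule, Matrix.IsSkewAdjoint, Matrix.IsAdjointPair] at *
  calc (A * B)ᵀ * J = Bᵀ * (Aᵀ * J) := by rw [transpose_mul, Matrix.mul_assoc]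
    _ = (Bᵀ * J) * -A := by rw [hA, Matrix.mul_assoc]
    _ = J * -(A * B) := by rw [hB, hAB]; noncomm_ring

theorem map_mem_skewAdjointMatricesSubmodule {S : Type*} [CommRing S] (f : R →+* S)
    {A : Matrix n n R} (hA : A ∈ skewAdjointMatricesSubmodule J) :
    A.map f ∈ skewAdjointMatricesSubmodule (J.map f) := by
  rw [mem_skewAdjointMatricesSubmodule_iff_transpose_mul_add_mul_eq_zero] at *
  rw [← transpose_map, ← Matrix.map_mul, ← Matrix.map_mul, ← Matrix.map_add f (map_add f), hA,
    Matrix.map_zero _ f.map_zero]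

theorem dotProduct_mulVec_add_dotProduct_mulVec_eq_zero {A : Matrix n n R}
    (hA : A ∈ skewAdjointMatricesSubmodule J) (y : n → R) :
    A *ᵥ y ⬝ᵥ J *ᵥ y + y ⬝ᵥ J *ᵥ (A *ᵥ y) = 0 := by
  rw [mem_skewAdjointMatricesSubmodule_iff_transpose_mul_add_mul_eq_zero] at hA
  rw [dotProduct_mulVec, vecMul_mulVec, ← dotProduct_mulVec, mulVec_mulVec, ← dotProduct_add,
    ← add_mulVec, hA, zero_mulVec, dotProduct_zero]

end SkewAdjoint

def sSgnInt : Fin 8 → Fin 8 → ℤ :=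
  ![![1, 1, 1, 1, 1, 1, 1, 1],
    ![1, 1, 1, -1, 1, 1, -1, 1],
    ![1, -1, 1, 1, 1, 1, 1, -1],
    ![1, 1, -1, 1, 1, -1, 1, 1],
    ![1, -1, -1, -1, 1, -1, -1, -1],
    ![1, -1, -1, 1, 1, -1, 1, -1],
    ![1, 1, -1, -1, 1, -1, -1, 1],
    ![1, -1, 1, -1, 1, 1, -1, -1]]

def EtInt (i : Fin 7) : Matrix (Fin 8) (Fin 8) ℤ :=
  of fun r c => if r = sIdx i.succ c then sSgnInt i.succ c else 0

def tauInt : Matrix (Fin 8) (Fin 8) ℤ := diagonal ![-1, 1, 1, 1, 1, -1, -1, -1]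

theorem sSgn_eq_intCast (k c : Fin 8) : sSgn k c = sSgnInt k c := by
  fin_cases k <;> fin_cases c <;> norm_num [sSgn, sSgnInt]

theorem Lt_single_one (k : Fin 8) (r c : Fin 8) :
    Lt (Pi.single k 1) r c = if r = sIdx k c then sSgn k c else 0 := by
  rw [Lt, of_apply, Finset.sum_eq_single k (fun i _ hik => by simp [hik]) (by simp)]
  simp

theorem Et_eq_map (i : Fin 7) : Et i = (EtInt i).map (Int.castRingHom ℝ) := by
  ext r c
  simp [Et, et, Lt_single_one, EtInt, sSgn_eq_intCast, apply_ite ((↑) : ℤ → ℝ)]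

theorem tauD_eq_map : tauD = tauInt.map (Int.castRingHom ℝ) := by
  rw [tauD, tauInt, diagonal_map (map_zero _)]
  congr 1
  ext k
  fin_cases k <;> simp

theorem EtInt_transpose_mul_add_mul_eq_zero :
    ∀ i, (EtInt i)ᵀ * tauInt + tauInt * EtInt i = 0 := by
  decide

theorem EtInt_mul_EtInt_anticomm : ∀ i j, i ≠ j → EtInt i * EtInt j = -(EtInt j * EtInt i) := by
  decide

theorem Et_mem_skewAdjointMatricesSubmodule (i : Fin 7) :
    Et i ∈ skewAdjointMatricesSubmodule tauD := by
  rw [Et_eq_map, tauD_eq_map]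
  exact map_mem_skewAdjointMatricesSubmodule _
    (mem_skewAdjointMatricesSubmodule_iff_transpose_mul_add_mul_eq_zero.mpr
      (EtInt_transpose_mul_add_mul_eq_zero i))

theorem Et_mul_Et_anticomm {i j : Fin 7} (hij : i ≠ j) : Et i * Et j = -(Et j * Et i) := by
  simp only [Et_eq_map, ← Matrix.map_mul, EtInt_mul_EtInt_anticomm i j hij]
  exact Matrix.map_neg _ (map_neg (Int.castRingHom ℝ)) _

theorem Xtw_mem_skewAdjointMatricesSubmodule (w : Fin 7 → Fin 7 → ℝ) :
    Xtw w ∈ skewAdjointMatricesSubmodule tauD := by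
  refine Submodule.sum_mem _ fun i _ => Submodule.sum_mem _ fun j _ => ?_
  split_ifs with hij
  · exact Submodule.smul_mem _ _ <| mul_mem_skewAdjointMatricesSubmodule_of_anticomm
      (Et_mem_skewAdjointMatricesSubmodule i) (Et_mem_skewAdjointMatricesSubmodule j)
      (Et_mul_Et_anticomm hij.ne)
  · exact Submodule.zero_mem _

/-- every `X = Σ_{i<j} w̃_{ij} Ẽ^i Ẽ^j` satisfies `Xᵀ τ + τ X = 0`,
hence the split quadratic form `|y|² = -yᵀ τ y` is infinitesimally preserved. -/
theorem so43_preserves_split_form (w : Fin 7 → Fin 7 → ℝ) :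
    (Xtw w)ᵀ * tauD + tauD * (Xtw w) = 0 ∧
    ∀ y : Fin 8 → ℝ,
      -((Xtw w).mulVec y ⬝ᵥ tauD.mulVec y) - (y ⬝ᵥ tauD.mulVec ((Xtw w).mulVec y)) = 0 := by
  have hX := Xtw_mem_skewAdjointMatricesSubmodule w
  refine ⟨mem_skewAdjointMatricesSubmodule_iff_transpose_mul_add_mul_eq_zero.mp hX, fun y => ?_⟩
  rw [sub_eq_add_neg, ← neg_add, dotProduct_mulVec_add_dotProduct_mulVec_eq_zero hX, neg_zero]
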